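/- Let Ω be a homotopy functor from Zᵗ(Top) to a preadditive category D which preserves the involution, meaning Ω(f,-ζ) = -Ω(f,ζ) for every morphism (f,ζ) of Zᵗ(Top); in particular Ω(1_X, -1_{Λ_X}) = -id_{Ω(X,Λ_X)}. Let (f,ζ) : (X,Λ_X) → (Y,Λ_Y) be a morphism with X path-connected, and suppose F : X×[0,1] → Y is continuous with F∘ι₀ = F∘ι₁ = f, and there is x ∈ X such that the loop L : t ↦ F(x,t) satisfies Λ_Y(L) = -1. Then Ω(f,ζ) = -Ω(f,ζ), i.e. 2·Ω(f,ζ) = 0 in the abelian group of morphisms Hom(Ω(X,Λ_X), Ω(Y,Λ_Y)). -/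

import Mathlib

open unitInterval CategoryTheory

structure ZtSystem (X : Type*) [TopologicalSpace X] where
  val : ∀ {x y : X}, Path x y → ℤˣ
  homotopic_eq : ∀ {x y : X} {γ γ' : Path x y}, Path.Homotopic γ γ' → val γ = val γ'
  refl_eq : ∀ x : X, val (Path.refl x) = 1
  trans_eq : ∀ {x y z : X} (γ : Path x y) (δ : Path y z), val (γ.trans δ) = val γ * val δ

def ZtSystem.IsMorphism {X : Type*} [TopologicalSpace X] (Λ₀ Λ₁ : ZtSystem X)
    (ζ : X → ℤˣ) : Prop :=
  ∀ {x y : X} (γ : Path x y), Λ₀.val γ * Λ₁.val γ = ζ x * ζ y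

def ZtSystem.pullback {X Y : Type*} [TopologicalSpace X] [TopologicalSpace Y]
    (f : C(X, Y)) (Λ : ZtSystem Y) : ZtSystem X where
  val γ := Λ.val (γ.map f.continuous)
  homotopic_eq h := Λ.homotopic_eq (h.map f)
  refl_eq x := by
    show Λ.val ((Path.refl x).map f.continuous) = 1
    rw [show (Path.refl x).map f.continuous = Path.refl (f x) from Path.ext rfl]
    exact Λ.refl_eq _
  trans_eq γ δ := by
    show Λ.val ((γ.trans δ).map f.continuous) = _
    rw [Path.map_trans]
    exact Λ.trans_eq _ _

/-- An object of the category `Zᵗ(Top)`: a space together with a `ℤᵗ`-system. -/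
structure ZtTop where
  carrier : Type*
  [inst : TopologicalSpace carrier]
  lam : ZtSystem carrier

attribute [instance] ZtTop.inst

/-- A morphism in `Zᵗ(Top)`. -/
@[ext]
structure ZtHom (A B : ZtTop) where
  f : C(A.carrier, B.carrier)
  ζ : A.carrier → ℤˣ
  isMor : ZtSystem.IsMorphism A.lam (ZtSystem.pullback f B.lam) ζ

instance : Category ZtTop where
  Hom := ZtHom
  id A := { f := ContinuousMap.id _, ζ := fun _ => 1,
            isMor := by
              intro x y γ
              show A.lam.val γ * A.lam.val (γ.map continuous_id) = 1 * 1
              rw [Path.map_id, Int.units_mul_self, one_mul] }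
  comp {A B C} u v :=
    { f := v.f.comp u.f
      ζ := fun x => v.ζ (u.f x) * u.ζ x
      isMor := by
        intro x y γ
        have h1 : A.lam.val γ * B.lam.val (γ.map u.f.continuous) = u.ζ x * u.ζ y := u.isMor γ
        have h2 : B.lam.val (γ.map u.f.continuous) *
            C.lam.val ((γ.map u.f.continuous).map v.f.continuous) =
            v.ζ (u.f x) * v.ζ (u.f y) := v.isMor (γ.map u.f.continuous)
        show A.lam.val γ * C.lam.val (γ.map (v.f.comp u.f).continuous) = _
        have hmap : γ.map (v.f.comp u.f).continuous
            = (γ.map u.f.continuous).map v.f.continuous := by rw [Path.map_map]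
        rw [hmap]
        have hb : B.lam.val (γ.map u.f.continuous) * B.lam.val (γ.map u.f.continuous) = 1 :=
          Int.units_mul_self _
        calc A.lam.val γ * C.lam.val ((γ.map u.f.continuous).map v.f.continuous)
            = (A.lam.val γ * B.lam.val (γ.map u.f.continuous)) *
              (B.lam.val (γ.map u.f.continuous) *
                C.lam.val ((γ.map u.f.continuous).map v.f.continuous)) := by
              rw [mul_assoc (A.lam.val γ), ← mul_assoc (B.lam.val (γ.map u.f.continuous))
                (B.lam.val (γ.map u.f.continuous)), hb, one_mul]
          _ = (u.ζ x * u.ζ y) * (v.ζ (u.f x) * v.ζ (u.f y)) := by rw [h1, h2]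
          _ = v.ζ (u.f x) * u.ζ x * (v.ζ (u.f y) * u.ζ y) := by
              rw [mul_mul_mul_comm, mul_comm (u.ζ x), mul_comm (u.ζ y)] }
  id_comp u := ZtHom.ext (ContinuousMap.comp_id _) (funext fun x => mul_one _)
  comp_id u := ZtHom.ext (ContinuousMap.id_comp _) (funext fun x => one_mul _)
  assoc u v w := ZtHom.ext rfl (funext fun x => (mul_assoc _ _ _).symm)

/-- The `ℤᵗ`-system `Λ • θ_{[0,1]}` on `X × [0,1]`. -/
def ZtSystem.prodI {X : Type*} [TopologicalSpace X] (Λ : ZtSystem X) :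
    ZtSystem (X × I) :=
  ZtSystem.pullback ⟨Prod.fst, continuous_fst⟩ Λ

/-- The path `s ↦ (x, s·t)` in `X × [0,1]` from `(x,0)` to `(x,t)`. -/
def Path.seg {X : Type*} [TopologicalSpace X] (x : X) (t : I) :
    Path ((x, 0) : X × I) (x, t) where
  toFun s := (x, ⟨s.1 * t.1, unitInterval.mul_mem s.2 t.2⟩)
  continuous_toFun := by fun_prop
  source' := by
    refine Prod.ext rfl (Subtype.ext ?_)
    simp
  target' := by
    refine Prod.ext rfl (Subtype.ext ?_)
    simp

/-- The vertical path `t ↦ (x, t)` in `X × [0,1]` from `(x,0)` to `(x,1)`. -/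
def Path.vert {X : Type*} [TopologicalSpace X] (x : X) :
    Path ((x, 0) : X × I) (x, 1) where
  toFun t := (x, t)
  continuous_toFun := by fun_prop
  source' := rfl
  target' := rfl

/-- The object `(X × [0,1], Λ • θ_{[0,1]})` of `Zᵗ(Top)`. -/
def ZtTop.prodI (A : ZtTop) : ZtTop :=
  { carrier := A.carrier × I, lam := A.lam.prodI }

/-- The end inclusion `(ι_t, 1_Λ) : (X,Λ) → (X × [0,1], Λ • θ_{[0,1]})`. -/
def ZtTop.iota (A : ZtTop) (t : I) : A ⟶ A.prodI where
  f := ⟨fun x => (x, t), by fun_prop⟩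
  ζ := fun _ => 1
  isMor := by
    intro x y γ
    show A.lam.val γ * A.lam.prodI.val (γ.map _) = 1 * 1
    have : A.lam.prodI.val (γ.map (Continuous.prodMk (f := fun x : A.carrier => x)
        (g := fun _ : A.carrier => t) continuous_id continuous_const)) = A.lam.val γ := by
      show A.lam.val ((γ.map _).map _) = _
      rw [Path.map_map]
      congr 1
    rw [this, Int.units_mul_self, one_mul]

/-- The projection `(r, 1) : (X × [0,1], Λ • θ_{[0,1]}) → (X,Λ)`. -/
def ZtTop.proj (A : ZtTop) : A.prodI ⟶ A where
  f := ⟨Prod.fst, continuous_fst⟩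
  ζ := fun _ => 1
  isMor := by
    intro p q μ
    show A.lam.prodI.val μ * A.lam.val (μ.map continuous_fst) = 1 * 1
    show A.lam.val (μ.map continuous_fst) * A.lam.val (μ.map continuous_fst) = 1 * 1
    rw [Int.units_mul_self, one_mul]

/-- A homotopy functor on `Zᵗ(Top)`. -/
def IsHomotopyFunctor {D : Type*} [Category D] (Ω : Functor ZtTop D) : Prop :=
  ∀ A : ZtTop, Ω.map (A.proj) ≫ Ω.map (A.iota 0) = 𝟙 (Ω.obj A.prodI)

/-- The endomorphism `(1_X, -1_Λ)` of `(X, Λ)`. -/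
def ZtTop.negId (A : ZtTop) : A ⟶ A where
  f := ContinuousMap.id _
  ζ := fun _ => -1
  isMor := by
    intro x y γ
    show A.lam.val γ * A.lam.val (γ.map continuous_id) = (-1 : ℤˣ) * (-1 : ℤˣ)
    rw [Path.map_id, Int.units_mul_self, neg_mul_neg, one_mul]

/-- The involution on `Zᵗ(Top)`: `(f, ζ) ↦ (f, -ζ)`. -/
def ZtHom.neg {A B : ZtTop} (u : A ⟶ B) : A ⟶ B where
  f := u.f
  ζ := fun x => -(u.ζ x)
  isMor := by
    intro x y γ
    rw [neg_mul_neg]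
    exact u.isMor γ

/-!
Extend `(f, ζ)` along the homotopy `F` to a morphism `G = (F, ζ_F)` out of the cylinder, where
`ζ_F (x, t)` is `ζ x` times the sign of `Λ_Y` along `F` on the vertical segment from `(x, 0)` to
`(x, t)`. Then `G ∘ ι₀ = (f, ζ)`, and `G ∘ ι₁` is a morphism over the same map `f`; two such
morphisms differ by a sign that is constant on path components, here `Λ_Y(L) = -1`, so
`G ∘ ι₁ = (f, -ζ)`. A homotopy functor does not distinguish `ι₀` from `ι₁`, whence
`Ω(f, ζ) = Ω(f, -ζ) = -Ω(f, ζ)`.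
-/

instance : ContractibleSpace I :=
  (convex_Icc (0 : ℝ) 1).contractibleSpace (Set.nonempty_Icc.mpr zero_le_one)

theorem Path.Homotopic.of_map_fst {X Y : Type*} [TopologicalSpace X] [TopologicalSpace Y]
    [SimplyConnectedSpace Y] {p q : X × Y} {α β : Path p q}
    (h : (α.map continuous_fst).Homotopic (β.map continuous_fst)) : α.Homotopic β := by
  have hα : α = (α.map continuous_fst).prod (α.map continuous_snd) := rfl
  have hβ : β = (β.map continuous_fst).prod (β.map continuous_snd) := rfl
  rw [hα, hβ]
  exact h.map2 Path.Homotopic.prodHomotopy (SimplyConnectedSpace.paths_homotopic _ _)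

theorem Int.units_mul_eq_mul_of_mul_eq_mul {a b c d : ℤˣ} (h : a * b = c * d) :
    a * c = b * d :=
  calc a * c = a * b * (b * c) := by rw [mul_assoc, ← mul_assoc b, Int.units_mul_self, one_mul]
    _ = c * c * (b * d) := by rw [h]; ac_rfl
    _ = b * d := by rw [Int.units_mul_self, one_mul]

theorem ZtSystem.pullback_pullback {X Y Z : Type*} [TopologicalSpace X] [TopologicalSpace Y]
    [TopologicalSpace Z] (Λ : ZtSystem Z) (g : C(Y, Z)) (f : C(X, Y)) :
    (Λ.pullback g).pullback f = Λ.pullback (g.comp f) :=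
  rfl

namespace ZtSystem

variable {X : Type*} [TopologicalSpace X]

theorem val_cast (Λ : ZtSystem X) {a b a' b' : X} (γ : Path a b) (ha : a' = a) (hb : b' = b) :
    Λ.val (γ.cast ha hb) = Λ.val γ := by
  subst ha hb
  rfl

theorem val_symm (Λ : ZtSystem X) {a b : X} (γ : Path a b) : Λ.val γ.symm = Λ.val γ := by
  have h : Λ.val γ * Λ.val γ.symm = Λ.val γ * Λ.val γ := by
    rw [← Λ.trans_eq, Λ.homotopic_eq ⟨(Path.Homotopy.reflTransSymm γ).symm⟩, Λ.refl_eq,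
      Int.units_mul_self]
  exact mul_left_cancel h

theorem IsMorphism.mul_eq_of_joined {Λ₀ Λ₁ : ZtSystem X} {ζ ζ' : X → ℤˣ}
    (h : IsMorphism Λ₀ Λ₁ ζ) (h' : IsMorphism Λ₀ Λ₁ ζ') {x y : X} (hxy : Joined x y) :
    ζ x * ζ' x = ζ y * ζ' y :=
  Int.units_mul_eq_mul_of_mul_eq_mul ((h hxy.somePath).symm.trans (h' hxy.somePath))

theorem IsMorphism.prodI_seg {Λ : ZtSystem X} {Λ' : ZtSystem (X × I)} {ζ : X → ℤˣ}
    (h : IsMorphism Λ (Λ'.pullback (.prodMk (.id X) (.const X 0))) ζ) :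
    IsMorphism Λ.prodI Λ' fun p => ζ p.1 * Λ'.val (Path.seg p.1 p.2) := by
  intro p q μ
  let μ₀ : Path (p.1, (0 : I)) (q.1, 0) :=
    (μ.map continuous_fst).map (ContinuousMap.prodMk (.id X) (.const X 0)).continuous
  have hμ : μ.Homotopic ((Path.seg p.1 p.2).symm.trans (μ₀.trans (Path.seg q.1 q.2))) := by
    refine .of_map_fst ?_
    have hseg : ∀ (x : X) (t : I), (Path.seg x t).map continuous_fst = Path.refl x :=
      fun _ _ => rfl
    simp only [Path.map_trans, hseg]
    exact .trans ⟨(Path.Homotopy.transRefl _).symm⟩ ⟨(Path.Homotopy.reflTrans _).symm⟩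
  have hval : Λ'.val μ = Λ'.val (Path.seg p.1 p.2) * (Λ'.val μ₀ * Λ'.val (Path.seg q.1 q.2)) := by
    rw [Λ'.homotopic_eq hμ, Λ'.trans_eq, Λ'.trans_eq, Λ'.val_symm]
  calc Λ.prodI.val μ * Λ'.val μ
      = (Λ.val (μ.map continuous_fst) * Λ'.val μ₀) *
        (Λ'.val (Path.seg p.1 p.2) * Λ'.val (Path.seg q.1 q.2)) := by
        rw [hval]; show Λ.val (μ.map continuous_fst) * _ = _; ac_rfl
    _ = ζ p.1 * Λ'.val (Path.seg p.1 p.2) * (ζ q.1 * Λ'.val (Path.seg q.1 q.2)) := by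
        rw [show Λ.val (μ.map continuous_fst) * Λ'.val μ₀ = ζ p.1 * ζ q.1 from h _]; ac_rfl

end ZtSystem

theorem ZtHom.eq_neg_of_f_eq {A B : ZtTop} [PathConnectedSpace A.carrier] {u v : A ⟶ B}
    (hf : v.f = u.f) {x : A.carrier} (hx : v.ζ x = -u.ζ x) : v = ZtHom.neg u := by
  have hv : ZtSystem.IsMorphism A.lam (B.lam.pullback u.f) v.ζ := hf ▸ v.isMor
  refine ZtHom.ext hf (funext fun y => ?_)
  show v.ζ y = -u.ζ y
  have hy := ZtSystem.IsMorphism.mul_eq_of_joined u.isMor hv (PathConnectedSpace.joined x y)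
  rw [hx, mul_neg, Int.units_mul_self] at hy
  calc v.ζ y = u.ζ y * (u.ζ y * v.ζ y) := by rw [← mul_assoc, Int.units_mul_self, one_mul]
    _ = -u.ζ y := by rw [← hy, mul_neg_one]

def ZtHom.ofHomotopy {A B : ZtTop} (m : A ⟶ B) (F : C(A.carrier × I, B.carrier))
    (hF0 : ∀ x, F (x, 0) = m.f x) : A.prodI ⟶ B where
  f := F
  ζ p := m.ζ p.1 * (B.lam.pullback F).val (Path.seg p.1 p.2)
  isMor := by
    have hF : F.comp (.prodMk (.id _) (.const _ 0)) = m.f := ContinuousMap.ext hF0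
    have hm : A.lam.IsMorphism ((B.lam.pullback F).pullback (.prodMk (.id _) (.const _ 0)))
        m.ζ := by
      rw [ZtSystem.pullback_pullback, hF]
      exact m.isMor
    intro _ _ γ
    exact hm.prodI_seg γ

section ofHomotopy

variable {A B : ZtTop} (m : A ⟶ B) (F : C(A.carrier × I, B.carrier))
  (hF0 : ∀ x, F (x, 0) = m.f x)

theorem ZtTop.iota_zero_comp_ofHomotopy : A.iota 0 ≫ ZtHom.ofHomotopy m F hF0 = m := by
  refine ZtHom.ext (ContinuousMap.ext hF0) (funext fun a => ?_)
  have hseg : Path.seg a (0 : I) = Path.refl (a, 0) :=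
    Path.ext (funext fun s => Prod.ext rfl (Subtype.ext (mul_zero s.1)))
  show m.ζ a * (B.lam.pullback F).val (Path.seg a 0) * 1 = m.ζ a
  rw [hseg, ZtSystem.refl_eq, mul_one, mul_one]

theorem ZtTop.iota_one_comp_ofHomotopy [PathConnectedSpace A.carrier]
    (hF1 : ∀ x, F (x, 1) = m.f x) (x : A.carrier)
    (hL : B.lam.val (((Path.vert x).map F.continuous).cast (hF0 x).symm (hF1 x).symm) = -1) :
    A.iota 1 ≫ ZtHom.ofHomotopy m F hF0 = ZtHom.neg m := by
  refine ZtHom.eq_neg_of_f_eq (ContinuousMap.ext hF1) (x := x) ?_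
  have hseg : Path.seg x (1 : I) = Path.vert x :=
    Path.ext (funext fun s => Prod.ext rfl (Subtype.ext (mul_one s.1)))
  show m.ζ x * B.lam.val ((Path.seg x 1).map F.continuous) * 1 = -m.ζ x
  rw [hseg, ← B.lam.val_cast _ (hF0 x).symm (hF1 x).symm, hL, mul_one, mul_neg_one]

end ofHomotopy

theorem ZtTop.iota_comp_proj (A : ZtTop) (t : I) : A.iota t ≫ A.proj = 𝟙 A :=
  ZtHom.ext rfl (funext fun _ => one_mul 1)

theorem IsHomotopyFunctor.map_iota {D : Type*} [Category D] {Ω : Functor ZtTop D}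
    (hΩ : IsHomotopyFunctor Ω) (A : ZtTop) (t : I) : Ω.map (A.iota t) = Ω.map (A.iota 0) :=
  calc Ω.map (A.iota t) = Ω.map (A.iota t) ≫ Ω.map A.proj ≫ Ω.map (A.iota 0) := by
        rw [hΩ A, Category.comp_id]
    _ = Ω.map (A.iota 0) := by
        rw [← Category.assoc, ← Ω.map_comp, A.iota_comp_proj, Ω.map_id, Category.id_comp]

open CategoryTheory in
/-- If moreover `Ω` takes values in a preadditive category and preserves the
involution (`Ω(f,-ζ) = -Ω(f,ζ)`), then under the hypotheses of Taylor's lemma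
with `Λ_Y(L) = -1` one gets `Ω(f,ζ) = -Ω(f,ζ)`, i.e. `2·Ω(f,ζ) = 0`. -/
theorem taylors_lemma_two_torsion {D : Type*} [Category D] [Preadditive D]
    (Ω : Functor ZtTop D) (hΩ : IsHomotopyFunctor Ω)
    (hinv : ∀ (A B : ZtTop) (u : A ⟶ B), Ω.map (ZtHom.neg u) = -Ω.map u)
    (A B : ZtTop) [PathConnectedSpace A.carrier] (m : A ⟶ B)
    (F : C(A.carrier × I, B.carrier))
    (hF0 : ∀ x : A.carrier, F (x, 0) = ZtHom.f m x)
    (hF1 : ∀ x : A.carrier, F (x, 1) = ZtHom.f m x)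
    (x : A.carrier)
    (hL : B.lam.val (((Path.vert x).map F.continuous).cast
      (hF0 x).symm (hF1 x).symm) = -1) :
    Ω.map m = -Ω.map m ∧ (2 : ℤ) • Ω.map m = 0 := by
  have hm : Ω.map m = -Ω.map m :=
    calc Ω.map m = Ω.map (A.iota 0 ≫ ZtHom.ofHomotopy m F hF0) := by
          rw [ZtTop.iota_zero_comp_ofHomotopy]
      _ = Ω.map (A.iota 1 ≫ ZtHom.ofHomotopy m F hF0) := by
          rw [Ω.map_comp, Ω.map_comp, hΩ.map_iota A 1]
      _ = Ω.map (ZtHom.neg m) := by rw [ZtTop.iota_one_comp_ofHomotopy m F hF0 hF1 x hL]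
      _ = -Ω.map m := hinv A B m
  exact ⟨hm, by rw [two_zsmul, ← eq_neg_iff_add_eq_zero]; exact hm⟩
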